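/- Let A, B ∈ R^{m×m} be symmetric positive semidefinite and let C ∈ R^{m×m} be such that the 2m×2m block matrix [[A, C],[Cᵀ, B]] is positive semidefinite. Then for every k with 1 ≤ k ≤ m, Σ_{j=1}^k σ_j(C) ≤ √(Σ_{j=1}^k λ_j(A)) · √(Σ_{j=1}^k λ_j(B)). In particular, if A and B are nonzero, the quantity ρ := (Σ_{j=1}^k σ_j(C)) / (√(Σ_{j=1}^k λ_j(A)) · √(Σ_{j=1}^k λ_j(B))) satisfies 0 ≤ ρ ≤ 1. -/

import Mathlib

/-!
Nonnegativity of the quadratic form of the block matrix on `(t x, y)` for every real `t` gives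
`xᵀCy ≤ √(xᵀAx) √(yᵀBy)`. For right singular vectors `vⱼ` of `C` and left ones `uⱼ = C vⱼ / σⱼ`
this bounds `σⱼ = uⱼᵀCvⱼ` by `√(uⱼᵀAuⱼ) √(vⱼᵀBvⱼ)`. Summing over `j < k`, Cauchy–Schwarz and
Ky Fan's maximum principle (the Rayleigh quotients of at most `k` orthonormal vectors sum to at
most the `k` largest eigenvalues of a positive semidefinite matrix) give the bound.
-/

open Matrix MeasureTheory ProbabilityTheory Filter Finset
open scoped BigOperators Topology

noncomputable section

/-- i-th largest eigenvalue (descending order, `λ_i`) of a real square matrix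
(junk value 0 if the matrix is not symmetric). -/
def eigsDesc {m : ℕ} (M : Matrix (Fin m) (Fin m) ℝ) : Fin m → ℝ :=
  if h : M.IsHermitian then
    fun i => (h.eigenvalues ∘ Tuple.sort h.eigenvalues) i.rev
  else 0

/-- i-th largest singular value of a real square matrix:  `σ_i(C) = √(λ_i(CᵀC))`. -/
def svals {m : ℕ} (C : Matrix (Fin m) (Fin m) ℝ) : Fin m → ℝ :=
  fun i => Real.sqrt (eigsDesc (Cᵀ * C) i)

/-- squared Frobenius norm -/
def frobSq {m n : ℕ} (C : Matrix (Fin m) (Fin n) ℝ) : ℝ :=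
  ∑ i, ∑ j, (C i j) ^ 2

/-- Frobenius norm -/
def frobNorm {m n : ℕ} (C : Matrix (Fin m) (Fin n) ℝ) : ℝ :=
  Real.sqrt (frobSq C)

open scoped RealInnerProductSpace

theorem Matrix.PosSemidef.fromBlocks_dotProduct_sq_le {m n : Type*} [Fintype m] [Fintype n]
    {A : Matrix m m ℝ} {B : Matrix n n ℝ} {C : Matrix m n ℝ}
    (h : (fromBlocks A C Cᵀ B).PosSemidef) (x : m → ℝ) (y : n → ℝ) :
    (x ⬝ᵥ C *ᵥ y) ^ 2 ≤ (x ⬝ᵥ A *ᵥ x) * (y ⬝ᵥ B *ᵥ y) := by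
  have hCT : y ⬝ᵥ Cᵀ *ᵥ x = x ⬝ᵥ C *ᵥ y := by
    rw [dotProduct_mulVec, vecMul_transpose, dotProduct_comm]
  have hq (t : ℝ) : 0 ≤ (x ⬝ᵥ A *ᵥ x) * (t * t) + 2 * (x ⬝ᵥ C *ᵥ y) * t + y ⬝ᵥ B *ᵥ y := by
    have := h.dotProduct_mulVec_nonneg (Sum.elim (t • x) y)
    simp only [star_trivial, fromBlocks_mulVec, Function.comp_def, Sum.elim_inl, Sum.elim_inr,
      sumElim_dotProduct_sumElim, dotProduct_add, mulVec_smul, dotProduct_smul, smul_dotProduct,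
      smul_eq_mul, hCT] at this
    linarith
  have := discrim_le_zero hq
  rw [discrim] at this
  nlinarith

theorem Matrix.PosSemidef.fromBlocks_dotProduct_le_sqrt_mul_sqrt {m n : Type*} [Fintype m]
    [Fintype n]    {A : Matrix m m ℝ} {B : Matrix n n ℝ} {C : Matrix m n ℝ}
    (h : (fromBlocks A C Cᵀ B).PosSemidef) (x : m → ℝ) (y : n → ℝ) :
    x ⬝ᵥ C *ᵥ y ≤ √(x ⬝ᵥ A *ᵥ x) * √(y ⬝ᵥ B *ᵥ y) := by
  rw [← Real.sqrt_mul' _ (by simpa [fromBlocks_mulVec, sumElim_dotProduct_sumElim] using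
    h.dotProduct_mulVec_nonneg (Sum.elim 0 y))]
  exact Real.le_sqrt_of_sq_le (h.fromBlocks_dotProduct_sq_le x y)

theorem sum_mul_le_sum_of_threshold {ι : Type*} [Fintype ι] [DecidableEq ι]
    (K : Finset ι) {d t : ι → ℝ} {c : ℝ} (hc : 0 ≤ c) (hdK : ∀ i ∈ K, c ≤ d i)
    (hdKc : ∀ i ∉ K, d i ≤ c) (ht₀ : ∀ i, 0 ≤ t i) (ht₁ : ∀ i, t i ≤ 1)
    (hsum : ∑ i, t i ≤ #K) :
    ∑ i, d i * t i ≤ ∑ i ∈ K, d i := by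
  have hK : ∑ i ∈ K, d i * t i ≤ ∑ i ∈ K, d i - c * #K + c * ∑ i ∈ K, t i := by
    rw [mul_sum, mul_comm, ← nsmul_eq_mul, ← sum_const, ← sum_sub_distrib, ← sum_add_distrib]
    exact sum_le_sum fun i hi => by nlinarith [hdK i hi, ht₁ i]
  have hKc : ∑ i ∈ Kᶜ, d i * t i ≤ c * ∑ i ∈ Kᶜ, t i := by
    rw [mul_sum]
    exact sum_le_sum fun i hi => mul_le_mul_of_nonneg_right (hdKc i (mem_compl.mp hi)) (ht₀ i)
  have hct : c * ∑ i, t i ≤ c * #K := mul_le_mul_of_nonneg_left hsum hc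
  rw [← sum_add_sum_compl K t] at hct
  rw [← sum_add_sum_compl K]
  linarith

theorem EuclideanSpace.real_inner_eq_dotProduct {n : Type*} [Fintype n]
    (x y : EuclideanSpace ℝ n) : ⟪x, y⟫ = ⇑x ⬝ᵥ ⇑y := by
  rw [EuclideanSpace.inner_eq_star_dotProduct, star_trivial, dotProduct_comm]

theorem Matrix.IsHermitian.dotProduct_mulVec_eq_sum_mul_inner_sq {ι n : Type*} [Fintype ι]
    [Fintype n] {A : Matrix n n ℝ} (hA : A.IsHermitian)
    (b : OrthonormalBasis ι ℝ (EuclideanSpace ℝ n)) {μ : ι → ℝ}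
    (hb : ∀ i, A *ᵥ ⇑(b i) = μ i • ⇑(b i)) (w : EuclideanSpace ℝ n) :
    ⇑w ⬝ᵥ A *ᵥ ⇑w = ∑ i, μ i * ⟪b i, w⟫ ^ 2 := by
  have hAT : Aᵀ = A := by rw [← conjTranspose_eq_transpose_of_trivial]; exact hA
  have hcoord (i : ι) : ⟪b i, WithLp.toLp 2 (A *ᵥ ⇑w)⟫ = μ i * ⟪b i, w⟫ := by
    rw [EuclideanSpace.real_inner_eq_dotProduct, EuclideanSpace.real_inner_eq_dotProduct,
      WithLp.ofLp_toLp, dotProduct_mulVec, ← mulVec_transpose, hAT, hb, smul_dotProduct,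
      smul_eq_mul]
  rw [← WithLp.ofLp_toLp 2 (A *ᵥ ⇑w), ← EuclideanSpace.real_inner_eq_dotProduct,
    ← b.sum_inner_mul_inner]
  simp only [hcoord, real_inner_comm w]
  exact sum_congr rfl fun i _ => by ring

theorem exists_orthonormalBasis_mulVec_eq_eigsDesc {m : ℕ} {M : Matrix (Fin m) (Fin m) ℝ}
    (hM : M.IsHermitian) :
    ∃ b : OrthonormalBasis (Fin m) ℝ (EuclideanSpace ℝ (Fin m)),
      ∀ j, M *ᵥ ⇑(b j) = eigsDesc M j • ⇑(b j) := by
  refine ⟨hM.eigenvectorBasis.reindex (Fin.revPerm.trans (Tuple.sort hM.eigenvalues)).symm,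
    fun j => ?_⟩
  simp only [OrthonormalBasis.reindex_apply, eigsDesc, dif_pos hM, Equiv.symm_symm,
    Equiv.trans_apply, Fin.revPerm_apply, Function.comp_apply]
  exact hM.mulVec_eigenvectorBasis _

theorem eigsDesc_antitone {m : ℕ} {M : Matrix (Fin m) (Fin m) ℝ} (hM : M.IsHermitian) :
    Antitone (eigsDesc M) := fun i j hij => by
  simp only [eigsDesc, dif_pos hM]
  exact Tuple.monotone_sort hM.eigenvalues (Fin.rev_le_rev.mpr hij)

theorem eigsDesc_nonneg {m : ℕ} {M : Matrix (Fin m) (Fin m) ℝ} (hM : M.PosSemidef)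
    (i : Fin m) : 0 ≤ eigsDesc M i := by
  simp only [eigsDesc, dif_pos hM.1]
  exact hM.eigenvalues_nonneg _

theorem Matrix.PosSemidef.sum_dotProduct_mulVec_le_sum_eigsDesc {m k : ℕ}
    {A : Matrix (Fin m) (Fin m) ℝ} (hA : A.PosSemidef) (hk : k ≤ m) {ι : Type*} [Fintype ι]
    {w : ι → EuclideanSpace ℝ (Fin m)} (hw : Orthonormal ℝ w) (hcard : Fintype.card ι ≤ k) :
    ∑ j, ⇑(w j) ⬝ᵥ A *ᵥ ⇑(w j)
      ≤ ∑ i ∈ univ.filter (fun i : Fin m => (i : ℕ) < k), eigsDesc A i := by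
  obtain rfl | hk₀ := k.eq_zero_or_pos
  · have : IsEmpty ι := Fintype.card_eq_zero_iff.mp (Nat.le_zero.mp hcard)
    simp
  obtain ⟨b, hb⟩ := exists_orthonormalBasis_mulVec_eq_eigsDesc hA.1
  have hbessel (i : Fin m) : ∑ j, ⟪b i, w j⟫ ^ 2 ≤ 1 := by
    simpa [real_inner_comm, b.orthonormal.1 i] using hw.sum_inner_products_le (b i) (s := univ)
  have hmass : ∑ i, ∑ j, ⟪b i, w j⟫ ^ 2 ≤ #(univ.filter (fun i : Fin m => (i : ℕ) < k)) := by
    rw [sum_comm]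
    simpa [b.sum_sq_inner_right, hw.1, Fin.card_filter_val_lt, hk] using hcard
  -- In the eigenbasis the sum is `∑ λᵢ tᵢ` with weights `tᵢ ∈ [0, 1]` of total mass at most `k`;
  -- compare with the threshold `λₖ₋₁`.
  calc ∑ j, ⇑(w j) ⬝ᵥ A *ᵥ ⇑(w j) = ∑ i, eigsDesc A i * ∑ j, ⟪b i, w j⟫ ^ 2 := by
        simp only [hA.1.dotProduct_mulVec_eq_sum_mul_inner_sq b hb, mul_sum]
        exact sum_comm
    _ ≤ _ := by
      refine sum_mul_le_sum_of_threshold _ (c := eigsDesc A ⟨k - 1, by omega⟩)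
        (eigsDesc_nonneg hA _) (fun i hi => ?_)
        (fun i hi => ?_) (fun i => by positivity) hbessel hmass
      all_goals
        simp only [mem_filter, mem_univ, true_and, not_lt] at hi
        exact eigsDesc_antitone hA.1 (Fin.le_def.mpr (by simp only; omega))

theorem Matrix.posSemidef_transpose_mul_self {m n : Type*} [Fintype m] [Fintype n]
    (C : Matrix m n ℝ) :
    (Cᵀ * C).PosSemidef := by
  simpa using posSemidef_conjTranspose_mul_self C

theorem exists_orthonormal_singularVectors {m : ℕ} (C : Matrix (Fin m) (Fin m) ℝ) :
    ∃ u v : Fin m → EuclideanSpace ℝ (Fin m), Orthonormal ℝ v ∧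
      Orthonormal ℝ (fun j : {j // svals C j ≠ 0} => u j) ∧
      ∀ j, ⇑(u j) ⬝ᵥ C *ᵥ ⇑(v j) = svals C j := by
  have hCC := posSemidef_transpose_mul_self C
  obtain ⟨v, hv⟩ := exists_orthonormalBasis_mulVec_eq_eigsDesc hCC.1
  have hCv (i j : Fin m) :
      (C *ᵥ ⇑(v i)) ⬝ᵥ C *ᵥ ⇑(v j) = svals C j ^ 2 * ⟪v i, v j⟫ := by
    rw [svals, Real.sq_sqrt (eigsDesc_nonneg hCC j), EuclideanSpace.real_inner_eq_dotProduct,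
      ← smul_eq_mul, ← dotProduct_smul, ← hv, ← mulVec_mulVec, dotProduct_mulVec _ Cᵀ,
      vecMul_transpose]
  have hvv := orthonormal_iff_ite.mp v.orthonormal
  -- `u j = σⱼ⁻¹ C vⱼ`; when `σⱼ = 0` this is `0`, and `uⱼ ⬝ C vⱼ = σⱼ` still holds.
  refine ⟨fun j => WithLp.toLp 2 ((svals C j)⁻¹ • C *ᵥ ⇑(v j)), v, v.orthonormal, ?_, fun j => ?_⟩
  · rw [orthonormal_iff_ite]
    rintro ⟨i, hi⟩ ⟨j, hj⟩
    rw [EuclideanSpace.real_inner_eq_dotProduct]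
    simp only [smul_dotProduct, dotProduct_smul, hCv, hvv, Subtype.mk.injEq, smul_eq_mul]
    split_ifs with h
    · subst h; field_simp
    · simp
  · simp only [smul_dotProduct, hCv, hvv, if_pos, smul_eq_mul, mul_one]
    rw [sq, ← mul_assoc, inv_mul_mul_self]

theorem sum_svals_le_sqrt_mul_sqrt {m k : ℕ} {A B C : Matrix (Fin m) (Fin m) ℝ}
    (hA : A.PosSemidef) (hB : B.PosSemidef) (hblock : (fromBlocks A C Cᵀ B).PosSemidef)
    (hk : k ≤ m) :
    ∑ j ∈ univ.filter (fun j : Fin m => (j : ℕ) < k), svals C j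
      ≤ √(∑ j ∈ univ.filter (fun j : Fin m => (j : ℕ) < k), eigsDesc A j) *
        √(∑ j ∈ univ.filter (fun j : Fin m => (j : ℕ) < k), eigsDesc B j) := by
  obtain ⟨u, v, hv, hu, huCv⟩ := exists_orthonormal_singularVectors C
  set S := (univ.filter (fun j : Fin m => (j : ℕ) < k)).filter (fun j => svals C j ≠ 0)
  have hS : Fintype.card S ≤ k := by
    rw [Fintype.card_coe]
    exact (card_filter_le _ _).trans_eq (by simp [Fin.card_filter_val_lt, hk])
  have huS : Orthonormal ℝ (fun j : S => u j) :=
    hu.comp (fun j : S => (⟨j, (mem_filter.mp j.2).2⟩ : {j // svals C j ≠ 0}))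
      fun _ _ h => Subtype.ext (Subtype.mk.inj h)
  have hvS : Orthonormal ℝ (fun j : S => v j) := hv.comp _ Subtype.val_injective
  calc ∑ j ∈ univ.filter (fun j : Fin m => (j : ℕ) < k), svals C j
      = ∑ j : S, ⇑(u j) ⬝ᵥ C *ᵥ ⇑(v j) := by
        simp only [huCv]
        rw [sum_coe_sort, sum_filter_ne_zero]
    _ ≤ ∑ j : S, √(⇑(u j) ⬝ᵥ A *ᵥ ⇑(u j)) * √(⇑(v j) ⬝ᵥ B *ᵥ ⇑(v j)) :=
        sum_le_sum fun j _ => hblock.fromBlocks_dotProduct_le_sqrt_mul_sqrt _ _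
    _ ≤ √(∑ j : S, ⇑(u j) ⬝ᵥ A *ᵥ ⇑(u j)) * √(∑ j : S, ⇑(v j) ⬝ᵥ B *ᵥ ⇑(v j)) :=
        Real.sum_sqrt_mul_sqrt_le _ (fun j => by simpa using hA.dotProduct_mulVec_nonneg (u j))
          (fun j => by simpa using hB.dotProduct_mulVec_nonneg (v j))
    _ ≤ _ := by
        gcongr
        · exact hA.sum_dotProduct_mulVec_le_sum_eigsDesc hk huS hS
        · exact hB.sum_dotProduct_mulVec_le_sum_eigsDesc hk hvS hS

/-- If the block matrix `[[A, C],[Cᵀ, B]]` is positive semidefinite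
(with `A, B` symmetric psd), then `Σ_{j=1}^k σ_j(C) ≤ √(Σ_{j=1}^k λ_j(A)) · √(Σ_{j=1}^k λ_j(B))`
for every `1 ≤ k ≤ m`; in particular, if `A` and `B` are nonzero, the correlation
`ρ = Σσ_j(C) / (√Σλ_j(A) · √Σλ_j(B))` satisfies `0 ≤ ρ ≤ 1`. -/
theorem correlation_parameter_bounds (m : ℕ) (A B C : Matrix (Fin m) (Fin m) ℝ)
    (hA : A.PosSemidef) (hB : B.PosSemidef)
    (hblock : (Matrix.fromBlocks A C Cᵀ B).PosSemidef) :
    (∀ k : ℕ, 1 ≤ k → k ≤ m →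
      ∑ j ∈ Finset.univ.filter (fun j : Fin m => (j : ℕ) < k), svals C j
        ≤ Real.sqrt (∑ j ∈ Finset.univ.filter (fun j : Fin m => (j : ℕ) < k), eigsDesc A j) *
          Real.sqrt (∑ j ∈ Finset.univ.filter (fun j : Fin m => (j : ℕ) < k), eigsDesc B j)) ∧
    (A ≠ 0 → B ≠ 0 → ∀ k : ℕ, 1 ≤ k → k ≤ m →
      0 ≤ (∑ j ∈ Finset.univ.filter (fun j : Fin m => (j : ℕ) < k), svals C j) /
            (Real.sqrt (∑ j ∈ Finset.univ.filter (fun j : Fin m => (j : ℕ) < k), eigsDesc A j) *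
             Real.sqrt (∑ j ∈ Finset.univ.filter (fun j : Fin m => (j : ℕ) < k), eigsDesc B j)) ∧
      (∑ j ∈ Finset.univ.filter (fun j : Fin m => (j : ℕ) < k), svals C j) /
            (Real.sqrt (∑ j ∈ Finset.univ.filter (fun j : Fin m => (j : ℕ) < k), eigsDesc A j) *
             Real.sqrt (∑ j ∈ Finset.univ.filter (fun j : Fin m => (j : ℕ) < k), eigsDesc B j))
          ≤ 1) := by
  have hsum (k : ℕ) (hk : k ≤ m) := sum_svals_le_sqrt_mul_sqrt hA hB hblock hk
  refine ⟨fun k _ hk => hsum k hk, fun _ _ k _ hk => ⟨?_, div_le_one_of_le₀ (hsum k hk) ?_⟩⟩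
  · exact div_nonneg (sum_nonneg fun j _ => Real.sqrt_nonneg _) (by positivity)
  · positivity
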